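/- arXiv:2002.04726 — 3 statements merged into one kernel-verified Lean document; each statement's English description precedes it below -/
import Mathlib

section
/- For all positive real numbers z, A, B and p, q > 1 with 1/p + 1/q = 1, the infimum over λ ≥ z of (A*λ + B/λ^{p/q}) is at most A*z + p^{1/p} * q^{1/q} * A^{1/q} * B^{1/p}, which in turn is at most A*z + 2*A^{1/q}*B^{1/p}. -/
/-!
Evaluate the objective at `λ = z + c` with `c = (pB/(qA))^{1/p}`, the minimiser of
`A λ + B / λ^{p/q}` over `λ > 0`. Since `λ^{p/q}` is monotone, the value is at most
`A z + A c + B / c^{p/q}`, and as `p/q = p - 1` the last two terms equal `q A c`, which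
simplifies to `p^{1/p} q^{1/q} A^{1/q} B^{1/p}`. Finally `p^{1/p} q^{1/q} ≤ 1/p·p + 1/q·q = 2`
by the weighted AM–GM inequality.
-/

open Real

namespace Real.HolderConjugate

variable {p q : ℝ}

theorem rpow_one_div_mul_rpow_one_div_le_two (hpq : p.HolderConjugate q) :
    p ^ (1 / p) * q ^ (1 / q) ≤ 2 := by
  have hp := hpq.pos
  have hq := hpq.symm.pos
  calc p ^ (1 / p) * q ^ (1 / q) ≤ 1 / p * p + 1 / q * q :=
        geom_mean_le_arith_mean2_weighted hpq.one_div_nonneg hpq.symm.one_div_nonneg hp.le hq.le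
          (by simpa [one_div] using hpq.inv_add_inv_eq_one)
    _ = 2 := by field_simp; norm_num

theorem rpow_one_div_mul_rpow_one_div {x : ℝ} (hpq : p.HolderConjugate q) (hx : 0 < x) :
    x ^ (1 / p) * x ^ (1 / q) = x := by
  rw [← rpow_add hx, one_div, one_div, hpq.inv_add_inv_eq_one, rpow_one]

theorem mul_add_div_rpow_eq {A B : ℝ} (hpq : p.HolderConjugate q) (hA : 0 < A) (hB : 0 < B) :
    A * (p * B / (q * A)) ^ (1 / p) + B / ((p * B / (q * A)) ^ (1 / p)) ^ (p / q) =
      p ^ (1 / p) * q ^ (1 / q) * A ^ (1 / q) * B ^ (1 / p) := by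
  have hp := hpq.pos
  have hq := hpq.symm.pos
  set x := p * B / (q * A)
  have hx : 0 < x := by positivity
  set c := x ^ (1 / p)
  have hc : 0 < c := by positivity
  have hcp : c ^ p = x := by rw [← rpow_mul hx.le, one_div_mul_cancel hpq.ne_zero, rpow_one]
  have hcpq : c ^ (p / q) = x / c := by rw [hpq.div_conj_eq_sub_one, rpow_sub_one hc.ne', hcp]
  calc A * c + B / c ^ (p / q) = q * A * c := by
        rw [hcpq]
        simp only [x]
        field_simp
        linear_combination -hpq.mul_eq_add
    _ = (q ^ (1 / p) * q ^ (1 / q)) * (A ^ (1 / p) * A ^ (1 / q)) * c := by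
        rw [hpq.rpow_one_div_mul_rpow_one_div hq, hpq.rpow_one_div_mul_rpow_one_div hA]
    _ = p ^ (1 / p) * q ^ (1 / q) * A ^ (1 / q) * B ^ (1 / p) := by
        have hc_eq : c = p ^ (1 / p) * B ^ (1 / p) / (q ^ (1 / p) * A ^ (1 / p)) := by
          simp only [c, x]
          rw [div_rpow (by positivity) (by positivity), mul_rpow hp.le hB.le, mul_rpow hq.le hA.le]
        rw [hc_eq]
        field_simp

end Real.HolderConjugate

theorem inf_lambda_bound_general (z A B p q : ℝ) (hz : 0 < z) (hA : 0 < A) (hB : 0 < B)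
    (hp : 1 < p) (hpq : 1 / p + 1 / q = 1) :
    sInf ((fun l => A * l + B / l ^ (p / q)) '' Set.Ici z) ≤
        A * z + p ^ (1 / p) * q ^ (1 / q) * A ^ (1 / q) * B ^ (1 / p) ∧
      A * z + p ^ (1 / p) * q ^ (1 / q) * A ^ (1 / q) * B ^ (1 / p) ≤
        A * z + 2 * A ^ (1 / q) * B ^ (1 / p) := by
  have hconj : p.HolderConjugate q :=
    holderConjugate_iff.mpr ⟨hp, by simpa only [one_div] using hpq⟩
  have hp₀ := hconj.pos
  have hq₀ := hconj.symm.pos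
  refine ⟨?_, ?_⟩
  · set c := (p * B / (q * A)) ^ (1 / p)
    have hc : 0 < c := by positivity
    have hbdd : BddBelow ((fun l => A * l + B / l ^ (p / q)) '' Set.Ici z) := by
      refine ⟨0, ?_⟩
      rintro _ ⟨l, hl, rfl⟩
      have : 0 < l := hz.trans_le hl
      positivity
    calc sInf ((fun l => A * l + B / l ^ (p / q)) '' Set.Ici z)
        ≤ A * (z + c) + B / (z + c) ^ (p / q) :=
          csInf_le hbdd ⟨z + c, by simp only [Set.mem_Ici]; linarith, rfl⟩
      _ = A * z + (A * c + B / (z + c) ^ (p / q)) := by ring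
      _ ≤ A * z + (A * c + B / c ^ (p / q)) := by
          gcongr
          linarith
      _ = _ := by rw [hconj.mul_add_div_rpow_eq hA hB]
  · gcongr
    exact hconj.rpow_one_div_mul_rpow_one_div_le_two

theorem inf_lambda_bound (z A B p q : ℝ) (hz : 0 < z) (hA : 0 < A) (hB : 0 < B)
    (hp : 1 < p) (hq : 1 < q) (hpq : 1 / p + 1 / q = 1) :
    sInf ((fun l => A * l + B / l ^ (p / q)) '' Set.Ici z) ≤
        A * z + p ^ (1 / p) * q ^ (1 / q) * A ^ (1 / q) * B ^ (1 / p) ∧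
      A * z + p ^ (1 / p) * q ^ (1 / q) * A ^ (1 / q) * B ^ (1 / p) ≤
        A * z + 2 * A ^ (1 / q) * B ^ (1 / p) :=
  inf_lambda_bound_general z A B p q hz hA hB hp hpq
end

section
/- In a normed space, for any real q ≥ 1, any r ≥ 1, and any points x, h with ‖x‖ ≤ 1 and ‖h‖ ≤ 1, the point x - ((1 - ‖x‖^q)/(q*r)) · h has norm at most 1. -/
theorem hint_shift_mem_ball_q {E : Type*} [NormedAddCommGroup E] [NormedSpace ℝ E]
    (q r : ℝ) (hq : 1 ≤ q) (hr : 1 ≤ r) (x h : E) (hx : ‖x‖ ≤ 1) (hh : ‖h‖ ≤ 1) :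
    ‖x - ((1 - ‖x‖ ^ q) / (q * r)) • h‖ ≤ 1 := by
  set z := ‖x‖ with hz
  have hz0 : 0 ≤ z := norm_nonneg x
  have hq0 : (0:ℝ) < q := lt_of_lt_of_le one_pos hq
  have hzq : z ^ q ≤ 1 := Real.rpow_le_one hz0 hx hq0.le
  have hc0 : 0 ≤ (1 - z ^ q) / (q * r) := by
    apply div_nonneg (by linarith) (by positivity)
  -- Bernoulli: 1 + q*(z-1) ≤ z^q
  have hb : 1 + q * (z - 1) ≤ z ^ q := by
    have := one_add_mul_self_le_rpow_one_add (s := z - 1) (by linarith) hq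
    simpa using this
  have hkey : (1 - z ^ q) / (q * r) ≤ 1 - z := by
    calc (1 - z ^ q) / (q * r) ≤ (1 - z ^ q) / q := by
          apply div_le_div_of_nonneg_left (by linarith) hq0
          nlinarith
      _ ≤ 1 - z := by
          rw [div_le_iff₀ hq0]; nlinarith
  calc ‖x - ((1 - z ^ q) / (q * r)) • h‖
      ≤ ‖x‖ + ‖((1 - z ^ q) / (q * r)) • h‖ := norm_sub_le _ _
    _ = z + (1 - z ^ q) / (q * r) * ‖h‖ := by rw [norm_smul, Real.norm_of_nonneg hc0, hz]
    _ ≤ z + (1 - z ^ q) / (q * r) := by nlinarith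
    _ ≤ 1 := by linarith
end

section
/- Suppose positive reals λ_1, ..., λ_T satisfy the recursion λ_t = G_t / (σ_{1:t} + μλ_{1:t})^a for all t, where G_t, σ_t, a, μ are positive. Then for any nonnegative reals λ*_1, ..., λ*_T: sum over t of [λ_t + G_t/(σ_{1:t} + μλ_{1:t})^a] ≤ 2 · sum over t of [λ*_t + G_t/(σ_{1:t} + μλ*_{1:t})^a]. -/
theorem self_confident_rate_lemma (T : ℕ) (a μ : ℝ) (ha : 0 < a) (hμ : 0 < μ)
    (G σ lam lamStar : ℕ → ℝ)
    (hG : ∀ t ∈ Finset.Icc 1 T, 0 < G t) (hσ : ∀ t ∈ Finset.Icc 1 T, 0 < σ t)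
    (hlam : ∀ t ∈ Finset.Icc 1 T, 0 < lam t)
    (hlamStar : ∀ t ∈ Finset.Icc 1 T, 0 ≤ lamStar t)
    (hrec : ∀ t ∈ Finset.Icc 1 T,
      lam t = G t / ((∑ i ∈ Finset.Icc 1 t, σ i) + μ * ∑ i ∈ Finset.Icc 1 t, lam i) ^ a) :
    ∑ t ∈ Finset.Icc 1 T,
        (lam t + G t / ((∑ i ∈ Finset.Icc 1 t, σ i) + μ * ∑ i ∈ Finset.Icc 1 t, lam i) ^ a) ≤
      2 * ∑ t ∈ Finset.Icc 1 T,
        (lamStar t +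
          G t / ((∑ i ∈ Finset.Icc 1 t, σ i) + μ * ∑ i ∈ Finset.Icc 1 t, lamStar i) ^ a) := by
  -- denominator with lamStar is positive for t in range
  have hdenStar : ∀ t ∈ Finset.Icc 1 T,
      0 < (∑ i ∈ Finset.Icc 1 t, σ i) + μ * ∑ i ∈ Finset.Icc 1 t, lamStar i := by
    intro t ht
    simp only [Finset.mem_Icc] at ht
    have hsub : Finset.Icc 1 t ⊆ Finset.Icc 1 T := by
      apply Finset.Icc_subset_Icc_right ht.2
    have h1 : 0 < ∑ i ∈ Finset.Icc 1 t, σ i :=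
      Finset.sum_pos (fun i hi => hσ i (hsub hi)) ⟨1, Finset.mem_Icc.2 ⟨le_refl 1, ht.1⟩⟩
    have h2 : 0 ≤ ∑ i ∈ Finset.Icc 1 t, lamStar i :=
      Finset.sum_nonneg (fun i hi => hlamStar i (hsub hi))
    positivity
  have hdenLam : ∀ t ∈ Finset.Icc 1 T,
      0 < (∑ i ∈ Finset.Icc 1 t, σ i) + μ * ∑ i ∈ Finset.Icc 1 t, lam i := by
    intro t ht
    simp only [Finset.mem_Icc] at ht
    have hsub : Finset.Icc 1 t ⊆ Finset.Icc 1 T := by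
      apply Finset.Icc_subset_Icc_right ht.2
    have h1 : 0 < ∑ i ∈ Finset.Icc 1 t, σ i :=
      Finset.sum_pos (fun i hi => hσ i (hsub hi)) ⟨1, Finset.mem_Icc.2 ⟨le_refl 1, ht.1⟩⟩
    have h2 : 0 ≤ ∑ i ∈ Finset.Icc 1 t, lam i :=
      Finset.sum_nonneg (fun i hi => (hlam i (hsub hi)).le)
    positivity
  -- LHS = 2 * sum lam
  have hLHS : ∑ t ∈ Finset.Icc 1 T,
      (lam t + G t / ((∑ i ∈ Finset.Icc 1 t, σ i) + μ * ∑ i ∈ Finset.Icc 1 t, lam i) ^ a)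
      = 2 * ∑ t ∈ Finset.Icc 1 T, lam t := by
    rw [Finset.mul_sum]
    apply Finset.sum_congr rfl
    intro t ht
    rw [← hrec t ht]; ring
  rw [hLHS]
  -- the G-terms with lamStar are nonneg
  have hgnn : ∀ t ∈ Finset.Icc 1 T,
      0 ≤ G t / ((∑ i ∈ Finset.Icc 1 t, σ i) + μ * ∑ i ∈ Finset.Icc 1 t, lamStar i) ^ a := by
    intro t ht
    have := hdenStar t ht
    have := hG t ht
    positivity
  have key : ∑ t ∈ Finset.Icc 1 T, lam t ≤
      ∑ t ∈ Finset.Icc 1 T,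
        (lamStar t + G t / ((∑ i ∈ Finset.Icc 1 t, σ i) + μ * ∑ i ∈ Finset.Icc 1 t, lamStar i) ^ a) := by
    set p : ℕ → Prop := fun t => (∑ i ∈ Finset.Icc 1 t, lam i) ≤ ∑ i ∈ Finset.Icc 1 t, lamStar i
      with hp
    have hdec : DecidablePred p := fun t => inferInstanceAs (Decidable (_ ≤ _))
    classical
    set A := (Finset.Icc 1 T).filter p with hA
    set B := (Finset.Icc 1 T).filter (fun t => ¬ p t) with hB
    have hsplit : ∑ t ∈ Finset.Icc 1 T, lam t = ∑ t ∈ A, lam t + ∑ t ∈ B, lam t := by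
      rw [hA, hB, Finset.sum_filter_add_sum_filter_not]
    rw [hsplit]
    have hBle : ∑ t ∈ B, lam t ≤ ∑ t ∈ Finset.Icc 1 T,
        G t / ((∑ i ∈ Finset.Icc 1 t, σ i) + μ * ∑ i ∈ Finset.Icc 1 t, lamStar i) ^ a := by
      have h1 : ∑ t ∈ B, lam t ≤ ∑ t ∈ B,
          G t / ((∑ i ∈ Finset.Icc 1 t, σ i) + μ * ∑ i ∈ Finset.Icc 1 t, lamStar i) ^ a := by
        apply Finset.sum_le_sum
        intro t ht
        rw [hB, Finset.mem_filter] at ht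
        obtain ⟨htT, hnp⟩ := ht
        rw [hrec t htT]
        apply div_le_div_of_nonneg_left (hG t htT).le
        · exact Real.rpow_pos_of_pos (hdenStar t htT) a
        · apply Real.rpow_le_rpow (hdenStar t htT).le _ ha.le
          have : (∑ i ∈ Finset.Icc 1 t, lamStar i) ≤ ∑ i ∈ Finset.Icc 1 t, lam i :=
            le_of_not_ge hnp
          nlinarith [hμ]
      refine h1.trans (Finset.sum_le_sum_of_subset_of_nonneg (by rw [hB]; exact Finset.filter_subset _ _) ?_)
      intro t ht _
      exact hgnn t ht
    have hAle : ∑ t ∈ A, lam t ≤ ∑ t ∈ Finset.Icc 1 T, lamStar t := by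
      rcases Finset.eq_empty_or_nonempty A with hAe | hAne
      · rw [hAe]; simp
        exact Finset.sum_nonneg (fun t ht => hlamStar t ht)
      · set t0 := A.max' hAne with ht0
        have ht0A : t0 ∈ A := A.max'_mem hAne
        rw [hA, Finset.mem_filter] at ht0A
        obtain ⟨ht0T, hpt0⟩ := ht0A
        simp only [Finset.mem_Icc] at ht0T
        have hsub : A ⊆ Finset.Icc 1 t0 := by
          intro t ht
          have htle : t ≤ t0 := A.le_max' t ht
          rw [hA, Finset.mem_filter, Finset.mem_Icc] at ht
          exact Finset.mem_Icc.2 ⟨ht.1.1, htle⟩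
        have h1 : ∑ t ∈ A, lam t ≤ ∑ t ∈ Finset.Icc 1 t0, lam t := by
          apply Finset.sum_le_sum_of_subset_of_nonneg hsub
          intro t ht _
          rw [Finset.mem_Icc] at ht
          exact (hlam t (Finset.mem_Icc.2 ⟨ht.1, ht.2.trans ht0T.2⟩)).le
        have h2 : ∑ t ∈ Finset.Icc 1 t0, lam t ≤ ∑ t ∈ Finset.Icc 1 t0, lamStar t := hpt0
        have h3 : ∑ t ∈ Finset.Icc 1 t0, lamStar t ≤ ∑ t ∈ Finset.Icc 1 T, lamStar t := by
          apply Finset.sum_le_sum_of_subset_of_nonneg (Finset.Icc_subset_Icc_right ht0T.2)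
          intro t ht _
          exact hlamStar t ht
        linarith
    rw [Finset.sum_add_distrib]
    linarith
  linarith
end
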